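/- Let S and T be finite types, v a smooth vector field on ℝ^S and w a smooth vector field on ℝ^T. Let swap : S ⊕ T → T ⊕ S be the canonical swap function. Then D(swap)(δ_{S,T}(v,w)) = δ_{T,S}(w,v) as vector fields on ℝ^{T ⊕ S} (symmetry of the laxator of D). -/
import Mathlib


open scoped Classical

/-- The pushforward of a function `ψ : S → ℝ` along `f : S → S'`. -/
noncomputable def pushforward {S S' : Type} [Fintype S] (f : S → S') (ψ : S → ℝ) : S' → ℝ :=
  fun s' => ∑ s : S, if f s = s' then ψ s else 0

/-- The pullback of a function `ψ : S' → ℝ` along `f : S → S'`. -/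
def pullback {S S' : Type} (f : S → S') (ψ : S' → ℝ) : S → ℝ := ψ ∘ f

/-- The action of `D` on functions: `D(f)(v) = f_* ∘ v ∘ f^*`. -/
noncomputable def Dmap {S S' : Type} [Fintype S] (f : S → S')
    (v : (S → ℝ) → (S → ℝ)) : (S' → ℝ) → (S' → ℝ) :=
  pushforward f ∘ v ∘ pullback f

/-- The laxator `δ_{S,T} : D(S) × D(T) → D(S ⊕ T)`. -/
noncomputable def laxator {S T : Type} [Fintype S] [Fintype T]
    (v : (S → ℝ) → (S → ℝ)) (w : (T → ℝ) → (T → ℝ)) :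
    (S ⊕ T → ℝ) → (S ⊕ T → ℝ) :=
  fun ψ => pushforward (Sum.inl : S → S ⊕ T) (v (pullback Sum.inl ψ))
         + pushforward (Sum.inr : T → S ⊕ T) (w (pullback Sum.inr ψ))

lemma pushforward_add {S S' : Type} [Fintype S] (f : S → S') (a b : S → ℝ) :
    pushforward f (a + b) = pushforward f a + pushforward f b := by
  funext s'
  simp only [pushforward, Pi.add_apply, ← Finset.sum_add_distrib]
  refine Finset.sum_congr rfl fun s _ => ?_
  split <;> simp

lemma pushforward_comp {S S' S'' : Type} [Fintype S] [Fintype S']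
    (f : S → S') (g : S' → S'') (ψ : S → ℝ) :
    pushforward g (pushforward f ψ) = pushforward (g ∘ f) ψ := by
  funext t
  simp only [pushforward, Function.comp]
  have step : (∑ x : S', if g x = t then ∑ s : S, if f s = x then ψ s else 0 else 0)
      = ∑ x : S', ∑ s : S, if g x = t then (if f s = x then ψ s else 0) else 0 := by
    refine Finset.sum_congr rfl fun x _ => ?_
    split <;> simp
  rw [step, Finset.sum_comm]
  refine Finset.sum_congr rfl fun s _ => ?_
  rw [Finset.sum_eq_single (f s)]
  · simp
  · intro b _ hb
    simp [Ne.symm hb]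
  · simp

/-- Symmetry of the laxator of `D`: applying `D` to the canonical swap map
`S ⊕ T → T ⊕ S` interchanges the two arguments of the laxator. -/
theorem laxator_symmetric {S T : Type} [Fintype S] [Fintype T]
    (v : (S → ℝ) → (S → ℝ)) (hv : ContDiff ℝ (⊤ : ℕ∞) v)
    (w : (T → ℝ) → (T → ℝ)) (hw : ContDiff ℝ (⊤ : ℕ∞) w) :
    Dmap (Sum.swap : S ⊕ T → T ⊕ S) (laxator v w) = laxator w v := by
  funext ψ
  simp only [Dmap, Function.comp_apply, laxator, pushforward_add, pushforward_comp]
  have h1 : (Sum.swap ∘ (Sum.inl : S → S ⊕ T)) = (Sum.inr : S → T ⊕ S) := rfl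
  have h2 : (Sum.swap ∘ (Sum.inr : T → S ⊕ T)) = (Sum.inl : T → T ⊕ S) := rfl
  have h3 : pullback (Sum.inl : S → S ⊕ T) (pullback Sum.swap ψ)
      = pullback (Sum.inr : S → T ⊕ S) ψ := rfl
  have h4 : pullback (Sum.inr : T → S ⊕ T) (pullback Sum.swap ψ)
      = pullback (Sum.inl : T → T ⊕ S) ψ := rfl
  rw [h1, h2, h3, h4, add_comm]
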